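/- With $a$, $b$, $\nu(h)=b(h)|h|^{-1-\beta}$ as in the explicit construction, suppose additionally $0<\beta<3/2$ and $1/2\le\delta<\min(1,2-\beta)$. Then $\int_{h\ne 0}(1\wedge h^2)\,a(2h)\,\nu(h)\,dh=\infty$; in particular the rescaled density $a_{1/2}(h)\nu(h)=a(2h)\nu(h)$ fails the Lévy integrability condition. -/
import Mathlib


open MeasureTheory Filter

/-- The function `α₀` on `[0,1/2]`: `0` at `0`, `x^{-δ}` on `(0,1/4]`, `4^δ` on `[1/4,1/2]`. -/
noncomputable def alpha0 (δ x : ℝ) : ℝ :=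
  if x = 0 then 0 else if x ≤ 1 / 4 then x ^ (-δ) else (4 : ℝ) ^ δ

/-- The function `α₁` on `[0,1]`, symmetric about `1/2`. -/
noncomputable def alpha1 (δ x : ℝ) : ℝ :=
  if x ≤ 1 / 2 then alpha0 δ x else alpha0 δ (1 - x)

/-- The `1`-periodic extension `a` of `α₁` to the real line. -/
noncomputable def aFun (δ x : ℝ) : ℝ := alpha1 δ (Int.fract x)

/-- The shifted function `b(x) = a(x - 1/2)`. -/
noncomputable def bFun (δ x : ℝ) : ℝ := aFun δ (x - 1 / 2)

lemma aFun_eq (δ h : ℝ) (h1 : 3/8 < h) (h2 : h < 1/2) :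
    aFun δ (2*h) = (1 - 2*h) ^ (-δ) := by
  unfold aFun alpha1 alpha0
  rw [Int.fract_eq_self.mpr ⟨by linarith, by linarith⟩]
  rw [if_neg (by intro hc; linarith), if_neg (by intro hc; linarith),
    if_pos (by linarith)]

lemma bFun_eq (δ h : ℝ) (h1 : 3/8 < h) (h2 : h < 1/2) :
    bFun δ h = (1/2 - h) ^ (-δ) := by
  unfold bFun aFun alpha1 alpha0
  have hx : h - 1/2 = (h + 1/2) - ((1:ℤ) : ℝ) := by push_cast; ring
  rw [hx, Int.fract_sub_intCast, Int.fract_eq_self.mpr ⟨by linarith, by linarith⟩]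
  rw [if_neg (by intro hc; linarith), if_neg (by intro hc; linarith),
    if_pos (by linarith)]
  congr 1; ring

lemma lint_inv_top : ∫⁻ x in Set.Ioo (3/8:ℝ) (1/2), ENNReal.ofReal ((1/2 - x)⁻¹) = ⊤ := by
  by_contra hne
  have hmeas : Measurable fun x : ℝ => (1/2 - x)⁻¹ :=
    (measurable_const.sub measurable_id).inv
  have hpos : 0 ≤ᵐ[volume.restrict (Set.Ioo (3/8:ℝ) (1/2))] fun x : ℝ => (1/2 - x)⁻¹ := by
    rw [EventuallyLE, ae_restrict_iff' measurableSet_Ioo]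
    exact ae_of_all _ fun x hx => inv_nonneg.mpr (by linarith [hx.2])
  have hint : IntegrableOn (fun x : ℝ => (1/2 - x)⁻¹) (Set.Ioo (3/8:ℝ) (1/2)) := by
    refine ⟨hmeas.aestronglyMeasurable, ?_⟩
    rw [hasFiniteIntegral_iff_ofReal hpos]
    exact lt_top_iff_ne_top.mpr hne
  have hint' : IntegrableOn (fun x : ℝ => (x - 1/2)⁻¹) (Set.Ioo (3/8:ℝ) (1/2)) := by
    refine hint.neg.congr (ae_of_all _ fun x => ?_)
    rw [Pi.neg_apply, ← inv_neg]
    congr 1; ring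
  have hii : IntervalIntegrable (fun x : ℝ => (x - 1/2)⁻¹) volume (3/8) (1/2) :=
    (intervalIntegrable_iff_integrableOn_Ioo_of_le (by norm_num)).mpr hint'
  rcases intervalIntegrable_sub_inv_iff.mp hii with h | h
  · norm_num at h
  · exact h (by rw [Set.uIcc_of_le (by norm_num)]; constructor <;> norm_num)

/-- For `0 < β < 3/2` and `1/2 ≤ δ < min(1, 2-β)`, the rescaled density
`a_{1/2}(h)ν(h) = a(2h)b(h)|h|^{-1-β}` fails the Lévy integrability condition. -/
theorem stmt_8 (β δ : ℝ) (hβ0 : 0 < β) (hβ32 : β < 3 / 2)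
    (hδhalf : 1 / 2 ≤ δ) (hδ1 : δ < min 1 (2 - β)) :
    ∫⁻ h in ({0}ᶜ : Set ℝ),
      ENNReal.ofReal (min 1 (h ^ 2) * aFun δ (2 * h) * (bFun δ h * |h| ^ (-(1:ℝ) - β))) = ⊤ := by
  have hδ1' : δ < 1 := lt_of_lt_of_le hδ1 (min_le_left _ _)
  rw [eq_top_iff]
  have key : ∫⁻ h in Set.Ioo (3/8:ℝ) (1/2),
      ENNReal.ofReal (9/128 * (1/2 - h)⁻¹) = ⊤ := by
    have e : ∀ h : ℝ, ENNReal.ofReal (9/128 * (1/2 - h)⁻¹)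
        = ENNReal.ofReal (9/128) * ENNReal.ofReal ((1/2 - h)⁻¹) :=
      fun h => ENNReal.ofReal_mul (by norm_num)
    simp_rw [e]
    rw [lintegral_const_mul' _ _ ENNReal.ofReal_ne_top, lint_inv_top, ENNReal.mul_top]
    rw [Ne, ENNReal.ofReal_eq_zero]; norm_num
  calc (⊤ : ENNReal) = ∫⁻ h in Set.Ioo (3/8:ℝ) (1/2),
        ENNReal.ofReal (9/128 * (1/2 - h)⁻¹) := key.symm
    _ ≤ ∫⁻ h in Set.Ioo (3/8:ℝ) (1/2),
        ENNReal.ofReal (min 1 (h ^ 2) * aFun δ (2 * h) * (bFun δ h * |h| ^ (-(1:ℝ) - β))) := by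
        refine setLIntegral_mono' measurableSet_Ioo fun h hh => ?_
        obtain ⟨h1, h2⟩ := hh
        refine ENNReal.ofReal_le_ofReal ?_
        rw [aFun_eq δ h h1 h2, bFun_eq δ h h1 h2, abs_of_pos (by linarith)]
        set t : ℝ := 1/2 - h with htdef
        have ht : 0 < t := by simp only [htdef]; linarith
        have ht8 : t < 1/8 := by simp only [htdef]; linarith
        have h12 : 1 - 2*h = 2 * t := by simp only [htdef]; ring
        rw [h12, Real.mul_rpow (by norm_num) ht.le]
        have hu : 0 < t ^ (-δ) := Real.rpow_pos_of_pos ht _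
        have e1 : (9:ℝ)/64 ≤ min 1 (h^2) := le_min (by norm_num) (by nlinarith)
        have e2 : (1:ℝ)/2 ≤ (2:ℝ)^(-δ) := by
          have : (2:ℝ)^(-(1:ℝ)) ≤ (2:ℝ)^(-δ) :=
            Real.rpow_le_rpow_of_exponent_le one_le_two (by linarith)
          rwa [Real.rpow_neg_one, show ((2:ℝ))⁻¹ = 1/2 by norm_num] at this
        have e3 : t⁻¹ ≤ t^(-δ) * t^(-δ) := by
          rw [← Real.rpow_add ht]
          have : t^(-(1:ℝ)) ≤ t^(-δ + -δ) :=
            Real.rpow_le_rpow_of_exponent_ge ht (by linarith) (by linarith)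
          rwa [Real.rpow_neg_one] at this
        have e4 : (1:ℝ) ≤ h ^ (-(1:ℝ)-β) :=
          Real.one_le_rpow_of_pos_of_le_one_of_nonpos (by linarith) (by linarith)
            (by linarith)
        calc 9/128 * t⁻¹ ≤ 9/128 * (t^(-δ) * t^(-δ)) := by
              exact mul_le_mul_of_nonneg_left e3 (by norm_num)
          _ = 9/64 * (1/2 * t^(-δ)) * (t^(-δ) * 1) := by ring
          _ ≤ min 1 (h^2) * ((2:ℝ)^(-δ) * t^(-δ)) * (t^(-δ) * h ^ (-(1:ℝ)-β)) := by
              gcongr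
    _ ≤ _ := lintegral_mono_set (fun x hx => by
        simp only [Set.mem_compl_iff, Set.mem_singleton_iff]
        have : (3:ℝ)/8 < x := hx.1
        intro h0; rw [h0] at this; norm_num at this)
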